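/- Let φ be a consensus method on rooted phylogenetic trees satisfying unanimity, anonymity, neutrality, and extension stability. Let P be the profile of the two trees on leaf set {a,b,c,d} given by the hierarchies T1 with nontrivial clusters {a,b} and {a,b,c} (i.e. ((ab)c)d) and T2 with nontrivial clusters {b,c} and {a,b,c} (i.e. ((bc)a)d). Then {a,b,c} is a cluster of φ(P). -/

import Mathlib

/-! Both trees of the profile restrict to `((ac)d)` on `{a,c,d}` and to `((bc)d)` on `{b,c,d}`.
By unanimity these are the consensus trees of the restricted profiles, so extension stability
gives clusters `C, D` of `φ(P)` with `C ∩ {a,c,d} = {a,c}` and `D ∩ {b,c,d} = {b,c}`. They share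
`c`, so by laminarity `C ∪ D` is a cluster, and it is `{a,b,c}` because neither contains `d`. -/

/-- A (candidate) rooted phylogenetic tree, encoded by its set of clusters. -/
abbrev PTree : Type := Finset (Finset ℕ)

/-- Two clusters are nested: disjoint or one contained in the other. -/
abbrev Nested (C D : Finset ℕ) : Prop := C ∩ D = ∅ ∨ C ⊆ D ∨ D ⊆ C

/-- `H` is a hierarchy on leaf set `X`: a rooted phylogenetic tree in `RP(X)`. -/
structure IsHierarchy (X : Finset ℕ) (H : PTree) : Prop where
  subset_top : ∀ C ∈ H, C ⊆ X
  cluster_nonempty : ∀ C ∈ H, C.Nonempty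
  top_mem : X ∈ H
  singleton_mem : ∀ x ∈ X, ({x} : Finset ℕ) ∈ H
  laminar : ∀ C ∈ H, ∀ D ∈ H, Nested C D

/-- Restriction `T|_Y` of a tree to a subset `Y` of the leaves. -/
def restrictT (H : PTree) (Y : Finset ℕ) : PTree :=
  (H.image (fun C => C ∩ Y)).filter (fun C => C.Nonempty)

/-- A consensus method: for every leaf set and profile, an output tree. -/
abbrev ConsensusMethod : Type := Finset ℕ → List PTree → PTree

/-- Relabel the leaves of a tree by `f`. -/
def relabelT (f : ℕ → ℕ) (H : PTree) : PTree := H.image (fun C => C.image f)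

/-- A consensus method sends profiles of trees on `X` to a tree on `X`. -/
def ProducesHierarchy (φ : ConsensusMethod) : Prop :=
  ∀ (X : Finset ℕ) (P : List PTree), P ≠ [] → (∀ T ∈ P, IsHierarchy X T) →
    IsHierarchy X (φ X P)

/-- Unanimity: a constant profile yields that tree. -/
def Unanimity (φ : ConsensusMethod) : Prop :=
  ∀ (X : Finset ℕ) (T : PTree) (k : ℕ), k ≠ 0 → IsHierarchy X T →
    φ X (List.replicate k T) = T

/-- Anonymity: invariance under reordering the profile. -/
def Anonymity (φ : ConsensusMethod) : Prop :=
  ∀ (X : Finset ℕ) (P P' : List PTree), (∀ T ∈ P, IsHierarchy X T) →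
    P.Perm P' → φ X P = φ X P'

/-- Neutrality: equivariance under relabelling the leaves by a bijection. -/
def Neutrality (φ : ConsensusMethod) : Prop :=
  ∀ (X : Finset ℕ) (P : List PTree) (e : ℕ ≃ ℕ), (∀ T ∈ P, IsHierarchy X T) →
    φ (X.image e) (P.map (relabelT e)) = relabelT e (φ X P)

/-- Extension stability: `φ(P|_Y) ⪯ φ(P)|_Y` (every cluster of the consensus of
the restricted profile is a cluster of the restriction of the consensus). -/
def ExtensionStable (φ : ConsensusMethod) : Prop :=
  ∀ (X : Finset ℕ) (P : List PTree) (Y : Finset ℕ), (∀ T ∈ P, IsHierarchy X T) →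
    Y ⊆ X → Y.Nonempty →
    φ Y (P.map (fun T => restrictT T Y)) ⊆ restrictT (φ X P) Y

open Finset

theorem mem_restrictT {H : PTree} {Y C : Finset ℕ} :
    C ∈ restrictT H Y ↔ C.Nonempty ∧ ∃ B ∈ H, B ∩ Y = C := by
  simp [restrictT, and_comm]

theorem subset_restrictT_of_forall_restrictT_eq {φ : ConsensusMethod} (hU : Unanimity φ)
    (hE : ExtensionStable φ) {X Y : Finset ℕ} {P : List PTree} {S : PTree}
    (hP : ∀ T ∈ P, IsHierarchy X T) (hP₀ : P ≠ []) (hYX : Y ⊆ X) (hS : IsHierarchy Y S)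
    (hPS : ∀ T ∈ P, restrictT T Y = S) : S ⊆ restrictT (φ X P) Y := by
  have hmap : P.map (restrictT · Y) = List.replicate P.length S :=
    List.eq_replicate_iff.2 ⟨List.length_map _, by simpa using hPS⟩
  calc S = φ Y (List.replicate P.length S) := (hU Y S _ (by simpa using hP₀) hS).symm
    _ = φ Y (P.map (restrictT · Y)) := by rw [hmap]
    _ ⊆ restrictT (φ X P) Y := hE X P Y hP hYX (hS.cluster_nonempty Y hS.top_mem)

theorem IsHierarchy.union_mem {X : Finset ℕ} {H : PTree} (hH : IsHierarchy X H)
    {C D : Finset ℕ} (hC : C ∈ H) (hD : D ∈ H) (hCD : (C ∩ D).Nonempty) : C ∪ D ∈ H := by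
  rcases hH.laminar C hC D hD with h | h | h
  · simp [h] at hCD
  · rwa [union_eq_right.2 h]
  · rwa [union_eq_left.2 h]

theorem isHierarchy_singleton (x : ℕ) : IsHierarchy {x} {{x}} where
  subset_top := by simp
  cluster_nonempty := by simp
  top_mem := mem_singleton_self _
  singleton_mem := by simp
  laminar := by simp [Nested]

theorem IsHierarchy.join {X₁ X₂ : Finset ℕ} {H₁ H₂ : PTree} (h₁ : IsHierarchy X₁ H₁)
    (h₂ : IsHierarchy X₂ H₂) (hX : Disjoint X₁ X₂) :
    IsHierarchy (X₁ ∪ X₂) (insert (X₁ ∪ X₂) (H₁ ∪ H₂)) := by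
  have hsub : ∀ C ∈ insert (X₁ ∪ X₂) (H₁ ∪ H₂), C ⊆ X₁ ∪ X₂ := by
    simp only [mem_insert, mem_union]
    rintro C (rfl | hC | hC)
    · rfl
    · exact (h₁.subset_top C hC).trans subset_union_left
    · exact (h₂.subset_top C hC).trans subset_union_right
  have hdisj : ∀ C ∈ H₁, ∀ D ∈ H₂, C ∩ D = ∅ := fun C hC D hD =>
    disjoint_iff_inter_eq_empty.1 (hX.mono (h₁.subset_top C hC) (h₂.subset_top D hD))
  refine ⟨hsub, ?_, mem_insert_self _ _, ?_, ?_⟩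
  · simp only [mem_insert, mem_union]
    rintro C (rfl | hC | hC)
    · exact (h₁.cluster_nonempty _ h₁.top_mem).mono subset_union_left
    · exact h₁.cluster_nonempty C hC
    · exact h₂.cluster_nonempty C hC
  · simp only [mem_union]
    rintro x (hx | hx)
    · exact mem_insert_of_mem (mem_union_left _ (h₁.singleton_mem x hx))
    · exact mem_insert_of_mem (mem_union_right _ (h₂.singleton_mem x hx))
  · intro C hC D hD
    rcases mem_insert.1 hC with rfl | hC'
    · exact Or.inr (Or.inr (hsub D hD))
    rcases mem_insert.1 hD with rfl | hD'
    · exact Or.inr (Or.inl (hsub C hC))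
    rcases mem_union.1 hC' with hC' | hC' <;> rcases mem_union.1 hD' with hD' | hD'
    · exact h₁.laminar C hC' D hD'
    · exact Or.inl (hdisj C hC' D hD')
    · exact Or.inl (by rw [inter_comm, hdisj D hD' C hC'])
    · exact h₂.laminar C hC' D hD'

theorem isHierarchy_pq_r {p q r : ℕ} (hpq : p ≠ q) (hpr : p ≠ r) (hqr : q ≠ r) :
    IsHierarchy {p, q, r} ({{p}, {q}, {r}, {p, q}, {p, q, r}} : PTree) := by
  have h := ((isHierarchy_singleton p).join (isHierarchy_singleton q) (by simpa)).join
    (isHierarchy_singleton r) (by simp [hpr.symm, hqr.symm])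
  simp only [singleton_union, insert_union] at h
  convert h using 1
  ext; simp only [mem_insert, mem_singleton]; tauto

theorem isHierarchy_pq_r_s {p q r s : ℕ} (hpq : p ≠ q) (hpr : p ≠ r) (hps : p ≠ s)
    (hqr : q ≠ r) (hqs : q ≠ s) (hrs : r ≠ s) :
    IsHierarchy {p, q, r, s} ({{p}, {q}, {r}, {s}, {p, q}, {p, q, r}, {p, q, r, s}} : PTree) := by
  have h := (isHierarchy_pq_r hpq hpr hqr).join (isHierarchy_singleton s)
    (by simp [hps.symm, hqs.symm, hrs.symm])
  simp only [singleton_union, insert_union] at h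
  convert h using 1
  ext; simp only [mem_insert, mem_singleton]; tauto

theorem isHierarchy_p_qr_s {p q r s : ℕ} (hpq : p ≠ q) (hpr : p ≠ r) (hps : p ≠ s)
    (hqr : q ≠ r) (hqs : q ≠ s) (hrs : r ≠ s) :
    IsHierarchy {p, q, r, s} ({{p}, {q}, {r}, {s}, {q, r}, {p, q, r}, {p, q, r, s}} : PTree) := by
  have h := ((isHierarchy_singleton p).join ((isHierarchy_singleton q).join
    (isHierarchy_singleton r) (by simpa)) (by simp [hpq, hpr])).join
    (isHierarchy_singleton s) (by simp [hps.symm, hqs.symm, hrs.symm])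
  simp only [singleton_union, insert_union] at h
  convert h using 1
  ext; simp only [mem_insert, mem_singleton]; tauto

theorem IsHierarchy.triple_mem_of_inter_eq {a b c d : ℕ} {H : PTree}
    (hH : IsHierarchy {a, b, c, d} H) {C D : Finset ℕ} (hC : C ∈ H) (hD : D ∈ H)
    (hCY : C ∩ {a, c, d} = {a, c}) (hDY : D ∩ {b, c, d} = {b, c}) : {a, b, c} ∈ H := by
  have hCX := hH.subset_top C hC
  have hDX := hH.subset_top D hD
  simp only [Finset.ext_iff, subset_iff, mem_inter, mem_insert, mem_singleton] at hCY hDY hCX hDX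
  have hc : c ∈ C ∩ D := by grind
  have hCD : C ∪ D = {a, b, c} := by ext x; grind
  exact hCD ▸ hH.union_mem hC hD ⟨c, hc⟩

theorem cluster_abc_of_regular_extension_stable_general (φ : ConsensusMethod)
    (hH : ProducesHierarchy φ) (hU : Unanimity φ)
    (hE : ExtensionStable φ)
    (a b c d : ℕ) (hab : a ≠ b) (hac : a ≠ c) (had : a ≠ d)
    (hbc : b ≠ c) (hbd : b ≠ d) (hcd : c ≠ d) :
    ({a, b, c} : Finset ℕ) ∈
      φ {a, b, c, d}
        [({{a}, {b}, {c}, {d}, {a, b}, {a, b, c}, {a, b, c, d}} : PTree),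
         ({{a}, {b}, {c}, {d}, {b, c}, {a, b, c}, {a, b, c, d}} : PTree)] := by
  set P : List PTree := [{{a}, {b}, {c}, {d}, {a, b}, {a, b, c}, {a, b, c, d}},
    {{a}, {b}, {c}, {d}, {b, c}, {a, b, c}, {a, b, c, d}}]
  have hP : ∀ T ∈ P, IsHierarchy {a, b, c, d} T := by
    simpa [P] using ⟨isHierarchy_pq_r_s hab hac had hbc hbd hcd,
      isHierarchy_p_qr_s hab hac had hbc hbd hcd⟩
  have hres_acd : ∀ T ∈ P, restrictT T {a, c, d} = {{a}, {c}, {d}, {a, c}, {a, c, d}} := by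
    simp [P, restrictT, filter_insert, filter_singleton, hab, hac, had, hcd, hac.symm, had.symm,
      hbc.symm, hbd.symm, hcd.symm]
    constructor <;> ext <;> simp only [mem_insert, mem_singleton] <;> tauto
  have hres_bcd : ∀ T ∈ P, restrictT T {b, c, d} = {{b}, {c}, {d}, {b, c}, {b, c, d}} := by
    simp [P, restrictT, filter_insert, filter_singleton, hbc, hbd, hcd, hab.symm, hac.symm,
      had.symm, hbc.symm, hbd.symm, hcd.symm]
    ext; simp only [mem_insert, mem_singleton]; tauto
  obtain ⟨-, C, hC, hCY⟩ := mem_restrictT.1 <| subset_restrictT_of_forall_restrictT_eq hU hE hP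
    (List.cons_ne_nil _ _) (by simp) (isHierarchy_pq_r hac had hcd) hres_acd
    (by simp : ({a, c} : Finset ℕ) ∈ _)
  obtain ⟨-, D, hD, hDY⟩ := mem_restrictT.1 <| subset_restrictT_of_forall_restrictT_eq hU hE hP
    (List.cons_ne_nil _ _) (by simp) (isHierarchy_pq_r hbc hbd hcd) hres_bcd
    (by simp : ({b, c} : Finset ℕ) ∈ _)
  exact (hH _ _ (List.cons_ne_nil _ _) hP).triple_mem_of_inter_eq hC hD hCY hDY

/-- For a regular extension-stable consensus method, applied to the profile
`(((ab)c)d, ((bc)a)d)`, the set `{a,b,c}` is a cluster of the consensus tree. -/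
theorem cluster_abc_of_regular_extension_stable (φ : ConsensusMethod)
    (hH : ProducesHierarchy φ) (hU : Unanimity φ) (hA : Anonymity φ)
    (hN : Neutrality φ) (hE : ExtensionStable φ)
    (a b c d : ℕ) (hab : a ≠ b) (hac : a ≠ c) (had : a ≠ d)
    (hbc : b ≠ c) (hbd : b ≠ d) (hcd : c ≠ d) :
    ({a, b, c} : Finset ℕ) ∈
      φ {a, b, c, d}
        [({{a}, {b}, {c}, {d}, {a, b}, {a, b, c}, {a, b, c, d}} : PTree),
         ({{a}, {b}, {c}, {d}, {b, c}, {a, b, c}, {a, b, c, d}} : PTree)] :=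
  cluster_abc_of_regular_extension_stable_general φ hH hU hE a b c d hab hac had hbc hbd hcd
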